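/- Let f be convex, differentiable, (L0, L1)-smooth with minimizer x* and minimum f*. Suppose λ/2 ≥ ‖∇f(x_k)‖ ≥ L0/L1 and γ ≤ 1/(8 L1 λ). Let x_{k+1} = x_k − γ g_k with g_k = clip(v_k, λ) for some vector v_k, and set θ_k = g_k − ∇f(x_k). Then γ(f(x_k) − f*) ≤ ‖x_k − x*‖² − ‖x_{k+1} − x*‖² − 2γ⟨θ_k, x_k − x*⟩ + 2γ²‖θ_k‖². -/

import Mathlib

open MeasureTheory Real
open scoped RealInnerProductSpace

noncomputable def clip {d : ℕ} (x : EuclideanSpace ℝ (Fin d)) (lam : ℝ) :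
    EuclideanSpace ℝ (Fin d) := min 1 (lam / ‖x‖) • x

lemma conv_grad {d : ℕ} (f : EuclideanSpace ℝ (Fin d) → ℝ)
    (hconv : ConvexOn ℝ Set.univ f) (hf : Differentiable ℝ f)
    (x y : EuclideanSpace ℝ (Fin d)) :
    f x + ⟪gradient f x, y - x⟫ ≤ f y := by
  have hfd : HasFDerivAt f (InnerProductSpace.toDual ℝ _ (gradient f x)) x :=
    ((hf x).hasGradientAt).hasFDerivAt
  have hline : HasDerivAt (fun s : ℝ => x + s • (y - x)) (y - x) 0 := by
    simpa using ((hasDerivAt_id (0:ℝ)).smul_const (y - x)).const_add x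
  have h0 : x + (0:ℝ) • (y - x) = x := by simp
  have hcomp : HasDerivAt (fun s : ℝ => f (x + s • (y - x))) ⟪gradient f x, y - x⟫ 0 := by
    have := (h0 ▸ hfd : HasFDerivAt f _ (x + (0:ℝ) • (y - x))).comp_hasDerivAt 0 hline
    rw [InnerProductSpace.toDual_apply_apply, h0] at this; exact this
  have hφconv : ConvexOn ℝ Set.univ (fun s : ℝ => f (x + s • (y - x))) := by
    have h := hconv.comp_affineMap (AffineMap.lineMap x y)
    have : (f ∘ (AffineMap.lineMap x y)) = fun s : ℝ => f (x + s • (y - x)) := by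
      funext s
      simp [AffineMap.lineMap_apply, add_comm, vsub_eq_sub, vadd_eq_add]
    rw [this] at h
    simpa using h
  have hs := hφconv.le_slope_of_hasDerivAt (Set.mem_univ 0) (Set.mem_univ 1)
    (by norm_num) hcomp
  rw [slope_def_field] at hs
  have h1 : x + (1:ℝ) • (y - x) = y := by simp
  rw [h0, h1] at hs
  simp only [sub_zero, div_one] at hs
  linarith

lemma sSup_seg_bound {d : ℕ} (f : EuclideanSpace ℝ (Fin d) → ℝ)
    (L0 L1 : ℝ) (hL0 : 0 < L0) (hL1 : 0 < L1)
    (hsmooth : ∀ x y, ‖gradient f x - gradient f y‖ ≤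
      (L0 + L1 * sSup ((fun u => ‖gradient f u‖) '' segment ℝ x y)) * ‖x - y‖)
    (u v : EuclideanSpace ℝ (Fin d)) (hd : L1 * ‖v - u‖ ≤ 1/4) :
    sSup ((fun w => ‖gradient f w‖) '' segment ℝ u v)
      ≤ (4/3) * (‖gradient f u‖ + L0 * ‖v - u‖) := by
  have hRHSnn : (0:ℝ) ≤ (4/3) * (‖gradient f u‖ + L0 * ‖v - u‖) := by positivity
  by_cases hbdd : BddAbove ((fun w => ‖gradient f w‖) '' segment ℝ u v)
  swap
  · rw [Real.sSup_of_not_bddAbove hbdd]; exact hRHSnn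
  have hmemu : ‖gradient f u‖ ∈ (fun w => ‖gradient f w‖) '' segment ℝ u v :=
    ⟨u, left_mem_segment ℝ u v, rfl⟩
  have hne : ((fun w => ‖gradient f w‖) '' segment ℝ u v).Nonempty := ⟨_, hmemu⟩
  set S := sSup ((fun w => ‖gradient f w‖) '' segment ℝ u v) with hS
  have hSge : ‖gradient f u‖ ≤ S := le_csSup hbdd hmemu
  have hS0 : (0:ℝ) ≤ S := le_trans (norm_nonneg _) hSge
  have hstep : ∀ w ∈ segment ℝ u v,
      ‖gradient f w‖ ≤ ‖gradient f u‖ + (L0 + L1 * S) * ‖v - u‖ := by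
    intro w hw
    have hsub : segment ℝ u w ⊆ segment ℝ u v :=
      (convex_segment u v).segment_subset (left_mem_segment ℝ u v) hw
    have hS'le : sSup ((fun w' => ‖gradient f w'‖) '' segment ℝ u w) ≤ S :=
      csSup_le_csSup hbdd ⟨_, u, left_mem_segment ℝ u w, rfl⟩ (Set.image_mono hsub)
    have hS'ge : (0:ℝ) ≤ sSup ((fun w' => ‖gradient f w'‖) '' segment ℝ u w) := by
      refine le_trans (norm_nonneg (gradient f u)) (le_csSup ?_ ⟨u, left_mem_segment ℝ u w, rfl⟩)
      exact (hbdd.mono (Set.image_mono hsub))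
    have hwu : ‖w - u‖ ≤ ‖v - u‖ := by
      obtain ⟨a, b, ha, hb, hab, rfl⟩ := hw
      have hx : a • u + b • v - u = b • (v - u) := by
        have h1 : a • u + b • v - u = a • u + b • v - (a + b) • u := by rw [hab, one_smul]
        rw [h1, add_smul, smul_sub]; abel
      rw [hx, norm_smul, Real.norm_eq_abs, abs_of_nonneg hb]
      nlinarith [norm_nonneg (v - u)]
    have hsm := hsmooth u w
    have hgw : ‖gradient f w‖ - ‖gradient f u‖ ≤ ‖gradient f u - gradient f w‖ := by
      rw [norm_sub_rev]; exact norm_sub_norm_le _ _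
    have huw : ‖u - w‖ = ‖w - u‖ := norm_sub_rev u w
    have hmul : (L0 + L1 * sSup ((fun w' => ‖gradient f w'‖) '' segment ℝ u w)) * ‖u - w‖
        ≤ (L0 + L1 * S) * ‖v - u‖ := by
      rw [huw]
      apply mul_le_mul
      · nlinarith
      · exact hwu
      · exact norm_nonneg _
      · nlinarith
    linarith
  have hmain : S ≤ ‖gradient f u‖ + (L0 + L1 * S) * ‖v - u‖ := by
    apply csSup_le hne
    rintro _ ⟨w, hw, rfl⟩
    exact hstep w hw
  nlinarith [mul_le_mul_of_nonneg_right hd hS0, norm_nonneg (v - u)]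

set_option maxHeartbeats 1000000 in
lemma key_bound {d : ℕ} (f : EuclideanSpace ℝ (Fin d) → ℝ)
    (hconv : ConvexOn ℝ Set.univ f) (hf : Differentiable ℝ f)
    (L0 L1 : ℝ) (hL0 : 0 < L0) (hL1 : 0 < L1)
    (hsmooth : ∀ x y, ‖gradient f x - gradient f y‖ ≤
      (L0 + L1 * sSup ((fun u => ‖gradient f u‖) '' segment ℝ x y)) * ‖x - y‖)
    (xstar : EuclideanSpace ℝ (Fin d)) (hmin : ∀ y, f xstar ≤ f y)
    (xk : EuclideanSpace ℝ (Fin d)) (hgrad_lo : L0 / L1 ≤ ‖gradient f xk‖) :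
    ‖gradient f xk‖ ≤ 8 * L1 * (f xk - f xstar) := by
  set G := gradient f xk with hG
  set g := ‖G‖ with hg
  have hgpos : 0 < g := lt_of_lt_of_le (div_pos hL0 hL1) hgrad_lo
  have hL0g : L0 ≤ L1 * g := by
    have := (div_le_iff₀ hL1).mp hgrad_lo
    linarith
  set s : ℝ := 1 / (12 * L1 * g) with hs
  have hspos : 0 < s := by positivity
  set y : ℝ → EuclideanSpace ℝ (Fin d) := fun i => xk - (i * s) • G with hy
  have hnorm : ∀ i : ℝ, 0 ≤ i → ‖y i - xk‖ = i / (12 * L1) := by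
    intro i hi
    have : y i - xk = -((i * s) • G) := by rw [hy]; beta_reduce; abel
    rw [this, norm_neg, norm_smul, Real.norm_eq_abs,
      abs_of_nonneg (by positivity : (0:ℝ) ≤ i * s), ← hg, hs]
    field_simp
  have hkey : ∀ i : ℝ, 0 ≤ i → i ≤ 3 → ‖G - gradient f (y i)‖ ≤ (2 * i / 9) * g := by
    intro i h0i hi3
    have hni : ‖y i - xk‖ = i / (12 * L1) := hnorm i h0i
    have hL1n : L1 * ‖y i - xk‖ ≤ 1/4 := by
      rw [hni]
      rw [mul_div_assoc']
      rw [div_le_div_iff₀ (by positivity) (by norm_num)]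
      nlinarith
    have hsS := sSup_seg_bound f L0 L1 hL0 hL1 hsmooth xk (y i) hL1n
    have hsm := hsmooth xk (y i)
    rw [norm_sub_rev xk (y i), hni] at hsm
    rw [hni] at hsS
    rw [← hG] at hsm hsS
    have hL0i : L0 * (i / (12 * L1)) ≤ i * g / 12 := by
      have h := mul_le_mul_of_nonneg_right hL0g (show (0:ℝ) ≤ i / (12 * L1) by positivity)
      have he : L1 * g * (i / (12 * L1)) = i * g / 12 := by field_simp
      linarith [he ▸ h]
    have hcoef : L0 + L1 * sSup ((fun u => ‖gradient f u‖) '' segment ℝ xk (y i))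
        ≤ (8/3) * (L1 * g) := by
      have h1 : L1 * sSup ((fun u => ‖gradient f u‖) '' segment ℝ xk (y i))
          ≤ L1 * ((4/3) * (g + L0 * (i / (12 * L1)))) :=
        mul_le_mul_of_nonneg_left hsS hL1.le
      have h2 : L0 * (i / (12 * L1)) ≤ g / 4 := by nlinarith
      nlinarith
    have hfin : (L0 + L1 * sSup ((fun u => ‖gradient f u‖) '' segment ℝ xk (y i)))
        * (i / (12 * L1)) ≤ (8/3) * (L1 * g) * (i / (12 * L1)) :=
      mul_le_mul_of_nonneg_right hcoef (by positivity)
    have : (8:ℝ)/3 * (L1 * g) * (i / (12 * L1)) = 2 * i / 9 * g := by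
      field_simp; ring
    linarith [hsm, hfin, this ▸ hfin]
  -- telescoping
  have hdiff : ∀ i : ℝ, y i - y (i + 1) = s • G := by
    intro i
    have : y i - y (i + 1) = ((i + 1) * s) • G - (i * s) • G := by rw [hy]; beta_reduce; abel
    rw [this, ← sub_smul]; ring_nf
  have hstepB : ∀ i : ℝ, 0 ≤ i → i ≤ 2 →
      f (y (i + 1)) + s * (g ^ 2 - (2 * (i + 1) / 9) * g * g) ≤ f (y i) := by
    intro i h0i hi2
    have hcv := conv_grad f hconv hf (y (i + 1)) (y i)
    rw [show y i - y (i + 1) = s • G from hdiff i] at hcv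
    have hinner : ⟪gradient f (y (i + 1)), s • G⟫ = s * ⟪gradient f (y (i + 1)), G⟫ :=
      real_inner_smul_right _ _ _
    have hsplit : ⟪gradient f (y (i + 1)), G⟫ = ⟪G, G⟫ - ⟪G - gradient f (y (i + 1)), G⟫ := by
      rw [inner_sub_left]; ring
    have hcs : ⟪G - gradient f (y (i + 1)), G⟫ ≤ ‖G - gradient f (y (i + 1))‖ * ‖G‖ :=
      real_inner_le_norm _ _
    have hself : ⟪G, G⟫ = g ^ 2 := real_inner_self_eq_norm_sq G
    have hbd := hkey (i + 1) (by linarith) (by linarith)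
    have : s * (g ^ 2 - (2 * (i + 1) / 9) * g * g) ≤ ⟪gradient f (y (i + 1)), s • G⟫ := by
      rw [hinner, hsplit, hself]
      have h1 : ⟪G - gradient f (y (i + 1)), G⟫ ≤ (2 * (i + 1) / 9) * g * g := by
        calc ⟪G - gradient f (y (i + 1)), G⟫ ≤ ‖G - gradient f (y (i + 1))‖ * ‖G‖ := hcs
          _ ≤ (2 * (i + 1) / 9) * g * g := by
              rw [← hg]
              exact mul_le_mul_of_nonneg_right hbd (norm_nonneg _)
      apply mul_le_mul_of_nonneg_left _ hspos.le
      linarith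
    linarith
  have h0 : y 0 = xk := by rw [hy]; simp
  have h1 := hstepB 0 le_rfl (by norm_num)
  have h2 := hstepB 1 (by norm_num) (by norm_num)
  have h3 := hstepB 2 (by norm_num) (by norm_num)
  rw [h0] at h1
  have hm := hmin (y (2 + 1))
  -- f xk - f xstar ≥ (5/3) s g^2 = 5 g /(36 L1)
  have hsum : f xstar + (5/3) * s * g ^ 2 ≤ f xk := by
    have e1 : (0:ℝ) + 1 = 1 := by norm_num
    have e2 : (1:ℝ) + 1 = 2 := by norm_num
    rw [e1] at h1
    rw [e2] at h2
    clear_value y s g G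
    set A := f (y 1)
    set B := f (y 2)
    set C := f (y (2 + 1))
    linarith
  have hsg : (5/3) * s * g ^ 2 = 5 * g / (36 * L1) := by
    rw [hs]; field_simp; ring
  have hD : 0 ≤ f xk - f xstar := by linarith [hmin xk]
  clear h1 h2 h3 hm hstepB hkey hdiff hnorm hy h0
  clear_value y s g G
  rw [hsg] at hsum
  have h5 : 5 * g / (36 * L1) ≤ f xk - f xstar := by linarith
  rw [div_le_iff₀ (by positivity : (0:ℝ) < 36 * L1)] at h5
  linarith

set_option maxHeartbeats 1000000 in
theorem descent_case2 {d : ℕ} (f : EuclideanSpace ℝ (Fin d) → ℝ)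
    (hconv : ConvexOn ℝ Set.univ f) (hf : Differentiable ℝ f)
    (L0 L1 : ℝ) (hL0 : 0 < L0) (hL1 : 0 < L1)
    (hsmooth : ∀ x y, ‖gradient f x - gradient f y‖ ≤
      (L0 + L1 * sSup ((fun u => ‖gradient f u‖) '' segment ℝ x y)) * ‖x - y‖)
    (xstar : EuclideanSpace ℝ (Fin d)) (hmin : ∀ y, f xstar ≤ f y)
    (lam : ℝ) (hlam : 0 < lam)
    (γ : ℝ) (hγ : 0 < γ) (hγle : γ ≤ 1 / (8 * L1 * lam))
    (xk vk : EuclideanSpace ℝ (Fin d))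
    (hgrad_up : ‖gradient f xk‖ ≤ lam / 2) (hgrad_lo : L0 / L1 ≤ ‖gradient f xk‖) :
    γ * (f xk - f xstar) ≤ ‖xk - xstar‖ ^ 2 - ‖(xk - γ • clip vk lam) - xstar‖ ^ 2
      - 2 * γ * ⟪clip vk lam - gradient f xk, xk - xstar⟫
      + 2 * γ ^ 2 * ‖clip vk lam - gradient f xk‖ ^ 2 := by
  set G := gradient f xk with hG
  set gk := clip vk lam with hgk
  set u := xk - xstar with hu
  set g := ‖G‖ with hg
  have hgpos : 0 < g := lt_of_lt_of_le (div_pos hL0 hL1) hgrad_lo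
  -- expansion of the squared norm
  have heq : (xk - γ • gk) - xstar = u - γ • gk := by rw [hu]; abel
  have hexp : ‖(xk - γ • gk) - xstar‖ ^ 2
      = ‖u‖ ^ 2 - 2 * γ * ⟪gk, u⟫ + γ ^ 2 * ‖gk‖ ^ 2 := by
    rw [heq, norm_sub_sq_real, real_inner_smul_right, norm_smul, Real.norm_eq_abs,
      abs_of_pos hγ, real_inner_comm, mul_pow]
    ring
  -- inner product splitting
  have hsplit : ⟪gk - G, u⟫ = ⟪gk, u⟫ - ⟪G, u⟫ := inner_sub_left _ _ _
  -- bound on ‖gk‖²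
  have hsq : ‖gk‖ ^ 2 ≤ 2 * ‖gk - G‖ ^ 2 + 2 * g ^ 2 := by
    have h1 : ‖gk‖ ≤ ‖gk - G‖ + ‖G‖ := by
      have : gk = (gk - G) + G := by abel
      nth_rewrite 1 [this]
      exact norm_add_le _ _
    nlinarith [norm_nonneg gk, norm_nonneg (gk - G), norm_nonneg G, sq_nonneg (‖gk - G‖ - ‖G‖)]
  -- convexity
  have hcv := conv_grad f hconv hf xk xstar
  have hcvi : f xk - f xstar ≤ ⟪G, u⟫ := by
    have hx : xstar - xk = -u := by rw [hu]; abel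
    rw [hx, inner_neg_right, ← hG] at hcv
    linarith
  have hkey := key_bound f hconv hf L0 L1 hL0 hL1 hsmooth xstar hmin xk hgrad_lo
  rw [← hG, ← hg] at hkey
  have hD : 0 ≤ f xk - f xstar := by linarith [hmin xk]
  clear_value G gk u g
  clear hcv heq
  -- numeric bound : 2 γ² g² ≤ γ (f xk - f xstar)
  have hγg : γ * g ≤ 1 / (16 * L1) := by
    have h1 : γ * g ≤ (1 / (8 * L1 * lam)) * (lam / 2) :=
      mul_le_mul hγle hgrad_up (le_of_lt hgpos) (by positivity)
    have h2 : (1 / (8 * L1 * lam)) * (lam / 2) = 1 / (16 * L1) := by field_simp; ring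
    linarith [h2 ▸ h1]
  have hnum : 2 * γ ^ 2 * g ^ 2 ≤ γ * (f xk - f xstar) := by
    have h1 : (γ * g) * g ≤ (1 / (16 * L1)) * (8 * L1 * (f xk - f xstar)) :=
      mul_le_mul hγg hkey (le_of_lt hgpos) (by positivity)
    have h2 : (1 / (16 * L1)) * (8 * L1 * (f xk - f xstar)) = (f xk - f xstar) / 2 := by
      field_simp; ring
    rw [h2] at h1
    linarith [mul_le_mul_of_nonneg_left h1 hγ.le]
  -- assemble
  rw [hexp]
  have hGu : 2 * γ * (f xk - f xstar) ≤ 2 * γ * ⟪G, u⟫ :=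
    mul_le_mul_of_nonneg_left hcvi (by positivity)
  have hsq' : γ ^ 2 * ‖gk‖ ^ 2 ≤ 2 * γ ^ 2 * ‖gk - G‖ ^ 2 + 2 * γ ^ 2 * g ^ 2 := by
    nlinarith [sq_nonneg γ]
  rw [hsplit]
  linarith
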